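/- Let P be a polygon with n vertices whose boundary maps under σ_d as a covering map onto an n-gon σ_d(P). Then P can be extended to a sibling portrait in the disk (equivalently, P partitions the preimage vertices into groups of equal label-counts in each complementary region) if and only if σ_d restricted to the boundary of P is positively oriented. -/

import Mathlib

/-!
Only the converse needs work. If `P` is positively oriented, each gap of `P`, from a vertex
`p` to the next vertex `q`, has length `≡ 1 (mod n)`, so the points strictly inside it split
into runs of `n` consecutive points. Each run carries the labels in cyclic order, hence is a
positively oriented `n`-gon, and as arcs of the circle the runs are pairwise disjoint and
disjoint from `P`, so no two of these polygons cross.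
-/


/-- Cyclic displacement (number of steps counterclockwise) from `a` to `x` among
`m` marked points on the circle. -/
def arcPos {m : ℕ} (a x : Fin m) : ℕ := (x.val + m - a.val) % m

/-- `t` lies strictly between `p` and `q` in counterclockwise cyclic order. -/
def CycBtw {m : ℕ} (p t q : Fin m) : Prop := 0 < arcPos p t ∧ arcPos p t < arcPos p q

/-- `q` is the next vertex of `S` counterclockwise after `p`. -/
def IsNext {m : ℕ} (S : Finset (Fin m)) (p q : Fin m) : Prop :=
  p ∈ S ∧ q ∈ S ∧ p ≠ q ∧ ∀ r ∈ S, ¬ CycBtw p r q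

/-- The label of a marked point: the points are cyclically labeled by repetitions
of the word `x_0 x_1 … x_{n-1}`. -/
def label (n : ℕ) {m : ℕ} (p : Fin m) : ZMod n := (p.val : ZMod n)

/-- `S` is a polygon visiting the labels in positive (counterclockwise) cyclic
order, i.e. its boundary maps forward as a positively oriented covering of the
boundary of the `n`-gon. -/
def IsPosPolygon (n : ℕ) {m : ℕ} (S : Finset (Fin m)) : Prop :=
  2 ≤ S.card ∧ n ∣ S.card ∧ ∀ p q, IsNext S p q → label n q = label n p + 1

/-- Two vertex sets cross (link) on the circle. -/
def Crosses {m : ℕ} (S T : Finset (Fin m)) : Prop :=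
  ∃ p ∈ S, ∃ q ∈ S, ∃ r ∈ T, ∃ s ∈ T, CycBtw p r q ∧ CycBtw q s p

/-- A sibling portrait of the `n`-gon in a round gap of degree `D`: a collection of
pairwise disjoint, non-crossing, positively oriented polygons using all `D*n`
preimage points (so that together `D` sides map to each side of the `n`-gon). -/
def IsPortrait (D n : ℕ) (PP : Finset (Finset (Fin (D * n)))) : Prop :=
  (∀ S ∈ PP, IsPosPolygon n S) ∧
  (∀ S ∈ PP, ∀ T ∈ PP, S ≠ T → Disjoint S T ∧ ¬ Crosses S T) ∧
  (∀ p : Fin (D * n), ∃ S ∈ PP, p ∈ S)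

/-- `S` is a polygon whose boundary maps as a (possibly orientation-reversing)
covering of the boundary of the `n`-gon: every label is visited and consecutive
vertices of `S` carry consecutive labels, always advancing in the same direction. -/
def IsCoveringPolygon (n : ℕ) {m : ℕ} (S : Finset (Fin m)) : Prop :=
  2 ≤ S.card ∧ n ∣ S.card ∧ (∀ l : ZMod n, ∃ p ∈ S, label n p = l) ∧
    ((∀ p q, IsNext S p q → label n q = label n p + 1) ∨
     (∀ p q, IsNext S p q → label n q = label n p - 1))

section Cyclic

variable {m : ℕ}

theorem arcPos_eq_val_sub (a x : Fin m) : arcPos a x = (x - a).val := by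
  rw [arcPos, Fin.val_sub]
  congr 1
  have := a.isLt
  omega

theorem Fin.val_sub_eq_ite (a x : Fin m) :
    (x - a).val = if a ≤ x then x.val - a.val else x.val + m - a.val := by
  split_ifs with h
  · exact Fin.sub_val_of_le h
  · rw [Fin.coe_sub_iff_lt.2 (not_le.1 h)]; omega

theorem cycBtw_iff {p t q : Fin m} :
    CycBtw p t q ↔ 0 < (t - p).val ∧ (t - p).val < (q - p).val := by
  simp only [CycBtw, arcPos_eq_val_sub]

theorem label_add {n : ℕ} (hnm : n ∣ m) (x y : Fin m) :
    label n (x + y) = label n x + label n y := by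
  have hm : (m : ZMod n) = 0 := (ZMod.natCast_eq_zero_iff m n).2 hnm
  have hdiv := Nat.mod_add_div (x.val + y.val) m
  simp only [label, Fin.val_add]
  conv_rhs => rw [← Nat.cast_add, ← hdiv]
  push_cast
  rw [hm, zero_mul, add_zero]

theorem Crosses.symm {S T : Finset (Fin m)} (h : Crosses S T) : Crosses T S := by
  obtain ⟨p, hp, q, hq, r, hr, s, hs, h1, h2⟩ := h
  refine ⟨r, hr, s, hs, q, hq, p, hp, ?_, ?_⟩ <;>
  · simp only [cycBtw_iff, Fin.val_sub_eq_ite, Fin.le_def] at h1 h2 ⊢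
    have := p.isLt; have := q.isLt; have := r.isLt; have := s.isLt
    split_ifs at h1 h2 ⊢ <;> omega

end Cyclic

section Gaps

variable {m : ℕ} {S : Finset (Fin m)} {p q x : Fin m}

noncomputable def backDist (S : Finset (Fin m)) (x : Fin m) : ℕ :=
  sInf ((fun p => (x - p).val) '' (S : Set (Fin m)))

theorem backDist_le (hp : p ∈ S) : backDist S x ≤ (x - p).val :=
  Nat.sInf_le ⟨p, hp, rfl⟩

theorem exists_val_sub_eq_backDist (hS : S.Nonempty) (x : Fin m) :
    ∃ p ∈ S, (x - p).val = backDist S x := by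
  obtain ⟨p, hp⟩ := hS
  exact Nat.sInf_mem (Set.Nonempty.image _ ⟨p, hp⟩)

variable [NeZero m]

theorem Fin.val_sub_pos_iff {a b : Fin m} : 0 < (a - b).val ↔ a ≠ b := by
  rw [Nat.pos_iff_ne_zero, Fin.val_ne_zero_iff, sub_ne_zero]

theorem IsNext.val_sub_le (h : IsNext S p q) {r : Fin m} (hr : r ∈ S) (hrp : r ≠ p) :
    (q - p).val ≤ (r - p).val := by
  by_contra hlt
  exact h.2.2.2 r hr (cycBtw_iff.2 ⟨Fin.val_sub_pos_iff.2 hrp, by omega⟩)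

theorem exists_isNext (hS : 2 ≤ S.card) (hp : p ∈ S) : ∃ q, IsNext S p q := by
  have hne : (S.erase p).Nonempty := by
    rw [← Finset.card_pos, Finset.card_erase_of_mem hp]; omega
  obtain ⟨q, hq, hmin⟩ := Finset.exists_min_image (S.erase p) (fun r => (r - p).val) hne
  refine ⟨q, hp, Finset.mem_of_mem_erase hq, (Finset.ne_of_mem_erase hq).symm, ?_⟩
  rintro r hr hbtw
  rw [cycBtw_iff, Fin.val_sub_pos_iff] at hbtw
  exact absurd (hmin r (Finset.mem_erase.2 ⟨hbtw.1, hr⟩)) (not_le.2 hbtw.2)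

theorem backDist_pos (hS : S.Nonempty) (hx : x ∉ S) : 0 < backDist S x := by
  obtain ⟨p, hp, hpx⟩ := exists_val_sub_eq_backDist hS x
  rw [← hpx, Fin.val_sub_pos_iff]
  rintro rfl
  exact hx hp

/-- No vertex of `S` lies strictly inside the arc from `p` to the next vertex `q`. -/
theorem backDist_eq_of_isNext (h : IsNext S p q) (hx : (x - p).val < (q - p).val) :
    backDist S x = (x - p).val := by
  refine le_antisymm (backDist_le h.1) (le_csInf ⟨_, p, h.1, rfl⟩ ?_)
  rintro _ ⟨r, hr, rfl⟩
  by_contra! hlt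
  have hsub : (r - p).val = (x - p).val - (x - r).val := by
    rw [← Fin.sub_val_of_le (Fin.le_def.2 hlt.le), sub_sub_sub_cancel_left]
  exact h.2.2.2 r hr (cycBtw_iff.2 ⟨by omega, by omega⟩)

theorem backDist_lt_of_isNext (hpx : (x - p).val = backDist S x)
    (h : IsNext S p q) : backDist S x < (q - p).val := by
  rw [← hpx]
  by_contra! hle
  have hsub : (x - q).val = (x - p).val - (q - p).val := by
    rw [← Fin.sub_val_of_le (Fin.le_def.2 hle), sub_sub_sub_cancel_right]
  have := backDist_le (x := x) h.2.1
  have := Fin.val_sub_pos_iff.2 h.2.2.1.symm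
  omega

end Gaps

section Blocks

variable {m n : ℕ}

def arcBlock (n : ℕ) (a : Fin m) : Finset (Fin m) :=
  Finset.univ.filter fun y => (y - a).val < n

theorem mem_arcBlock {a y : Fin m} : y ∈ arcBlock n a ↔ (y - a).val < n := by
  simp [arcBlock]

theorem not_crosses_arcBlock {S : Finset (Fin m)} {a : Fin m} (h : Disjoint S (arcBlock n a)) :
    ¬ Crosses S (arcBlock n a) := by
  rintro ⟨p, hp, q, hq, r, hr, s, hs, h1, h2⟩
  have hpa : ¬ (p - a).val < n := fun h' => Finset.disjoint_left.1 h hp (mem_arcBlock.2 h')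
  have hqa : ¬ (q - a).val < n := fun h' => Finset.disjoint_left.1 h hq (mem_arcBlock.2 h')
  have hra := mem_arcBlock.1 hr
  have hsa := mem_arcBlock.1 hs
  simp only [cycBtw_iff, Fin.val_sub_eq_ite, Fin.le_def] at h1 h2 hpa hqa hra hsa
  have := p.isLt; have := q.isLt; have := r.isLt; have := s.isLt; have := a.isLt
  split_ifs at h1 h2 hpa hqa hra hsa <;> omega

variable [NeZero m]

theorem card_arcBlock (hnm : n ≤ m) (a : Fin m) : (arcBlock n a).card = n := by
  rw [← Finset.card_range n]
  refine Finset.card_nbij' (fun y => (y - a).val) (fun j => a + Fin.ofNat m j) ?_ ?_ ?_ ?_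
  · intro y hy
    simpa using mem_arcBlock.1 hy
  · intro j hj
    simp only [Finset.coe_range, Set.mem_Iio] at hj
    simp [mem_arcBlock, Nat.mod_eq_of_lt (hj.trans_le hnm), hj]
  · intro y _
    simp
  · intro j hj
    simp only [Finset.coe_range, Set.mem_Iio] at hj
    simp [Nat.mod_eq_of_lt (hj.trans_le hnm)]

theorem label_eq_add_of_val_sub {n : ℕ} (hnm : n ∣ m) {y z : Fin m} {k : ℕ}
    (h : (z - y).val = k) : label n z = label n y + k := by
  rw [← add_sub_cancel y z, label_add hnm]
  congr 1
  rw [label, h]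

theorem isPosPolygon_arcBlock (hn : 2 ≤ n) (hnm : n ∣ m) (a : Fin m) :
    IsPosPolygon n (arcBlock n a) := by
  have hle : n ≤ m := Nat.le_of_dvd (NeZero.pos m) hnm
  refine ⟨(card_arcBlock hle a).symm ▸ hn, (card_arcBlock hle a).symm ▸ dvd_rfl, ?_⟩
  intro y z h
  have hy := mem_arcBlock.1 h.1
  have hz := mem_arcBlock.1 h.2.1
  have hzy := Fin.val_sub_pos_iff.2 h.2.2.1.symm
  have hzy_eq : z - y = (z - a) - (y - a) := (sub_sub_sub_cancel_right z y a).symm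
  by_cases hlast : (y - a).val + 1 < n
  · have hone : ((y + 1) - y).val = 1 := by
      rw [add_sub_cancel_left, Fin.val_one', Nat.mod_eq_of_lt (by omega)]
    have hmem : y + 1 ∈ arcBlock n a := by
      rw [mem_arcBlock, add_sub_right_comm, Fin.val_add, Fin.val_one',
        Nat.mod_eq_of_lt (show 1 < m by omega), Nat.mod_eq_of_lt (by omega)]
      exact hlast
    have hle1 := h.val_sub_le hmem (fun he => by rw [he, sub_self] at hone; simp at hone)
    rw [hone] at hle1
    exact_mod_cast label_eq_add_of_val_sub hnm (show (z - y).val = 1 by omega)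
  · -- `y` is the last point of the block, so its successor can only be the first point `a`
    have hya : y ≠ a := fun he => by rw [he, sub_self] at hlast; simp at hlast; omega
    have haz := h.val_sub_le (mem_arcBlock.2 (by simpa using (show 0 < n by omega))) hya.symm
    have hay : a - y = 0 - (y - a) := by abel
    have hza : z - a = 0 := by
      rw [hzy_eq, hay] at haz
      rw [hzy_eq] at hzy
      generalize y - a = u at *
      generalize z - a = v at *
      simp only [Fin.val_sub_eq_ite, Fin.le_def, Fin.val_zero] at haz hzy
      ext
      split_ifs at haz hzy <;> simp only [Fin.val_zero] <;> omega
    rw [sub_eq_zero] at hza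
    subst hza
    have := label_eq_add_of_val_sub (n := n) hnm (show (y - z).val = n - 1 by omega)
    rw [this, Nat.cast_sub (by omega)]
    simp

end Blocks

section Portrait

variable {m n : ℕ} [NeZero m] {S : Finset (Fin m)}

theorem dvd_val_sub_sub_one_of_isNext (hnm : n ∣ m)
    (hpos : ∀ p q, IsNext S p q → label n q = label n p + 1) {p q : Fin m} (h : IsNext S p q) :
    n ∣ (q - p).val - 1 := by
  have hlabel : ((q - p).val : ZMod n) = ((1 : ℕ) : ZMod n) := by
    have := label_eq_add_of_val_sub (n := n) hnm (rfl : (q - p).val = _)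
    rw [hpos p q h] at this
    rw [Nat.cast_one]
    exact (add_left_cancel this).symm
  rw [ZMod.natCast_eq_natCast_iff] at hlabel
  exact (Nat.modEq_iff_dvd' (Fin.val_sub_pos_iff.2 h.2.2.1.symm)).1 hlabel.symm

theorem Nat.sub_mod_add_lt {n e g i : ℕ} (he : 0 < e) (heg : e < g) (hg : n ∣ g - 1)
    (hi : i < n) : e - (e - 1) % n + i < g := by
  have hmul : n ∣ e - 1 - (e - 1) % n := Nat.dvd_sub_mod (e - 1)
  have hmod := Nat.mod_le (e - 1) n
  have hfit : e - 1 - (e - 1) % n + n ≤ g - 1 := by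
    by_contra! hlt
    have := Nat.le_of_lt_add_of_dvd hlt hg hmul
    omega
  omega

/-- Blocks start at the points `p + 1 + n * k` after each vertex `p` of `S`. -/
noncomputable def blockStart (S : Finset (Fin m)) (n : ℕ) (x : Fin m) : Fin m :=
  x - Fin.ofNat m ((backDist S x - 1) % n)

theorem mem_arcBlock_blockStart (hn : 0 < n) (S : Finset (Fin m)) (x : Fin m) :
    x ∈ arcBlock n (blockStart S n x) := by
  rw [mem_arcBlock, blockStart, sub_sub_cancel, Fin.val_ofNat]
  exact (Nat.mod_le _ _).trans_lt (Nat.mod_lt _ hn)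

theorem blockStart_eq_of_mem_arcBlock (hS : 2 ≤ S.card) (hnm : n ∣ m)
    (hpos : ∀ p q, IsNext S p q → label n q = label n p + 1) {x y : Fin m} (hx : x ∉ S)
    (hy : y ∈ arcBlock n (blockStart S n x)) :
    y ∉ S ∧ blockStart S n y = blockStart S n x := by
  have hne : S.Nonempty := Finset.card_pos.1 (by omega)
  obtain ⟨p, hp, hpx⟩ := exists_val_sub_eq_backDist hne x
  obtain ⟨q, hq⟩ := exists_isNext hS hp
  have hn : 0 < n := Nat.pos_of_dvd_of_pos hnm (NeZero.pos m)
  set e := backDist S x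
  set r := (e - 1) % n
  set i := (y - blockStart S n x).val with hi
  have he : 0 < e := backDist_pos hne hx
  have heg : e < (q - p).val := backDist_lt_of_isNext hpx hq
  have hin : i < n := mem_arcBlock.1 hy
  have hfit := Nat.sub_mod_add_lt he heg (dvd_val_sub_sub_one_of_isNext hnm hpos hq) hin
  have hrm : r < m := (Nat.mod_lt _ hn).trans_le (Nat.le_of_dvd (NeZero.pos m) hnm)
  have hyp : (y - p).val = e - r + i := by
    have hsplit : y - p = ((x - p) - Fin.ofNat m r) + (y - blockStart S n x) := by
      simp only [blockStart]; abel
    have hle : Fin.ofNat m r ≤ x - p := by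
      rw [Fin.le_def, Fin.val_ofNat, Nat.mod_eq_of_lt hrm, hpx]
      exact (Nat.mod_le _ _).trans (by omega)
    rw [hsplit, Fin.val_add, Fin.sub_val_of_le hle, Fin.val_ofNat, Nat.mod_eq_of_lt hrm, hpx,
      ← hi, Nat.mod_eq_of_lt (hfit.trans (q - p).isLt)]
  have hdist : backDist S y = e - r + i := hyp ▸ backDist_eq_of_isNext hq (hyp ▸ hfit)
  have hrle : r ≤ e - 1 := Nat.mod_le _ _
  refine ⟨fun hyS => ?_, ?_⟩
  · have := backDist_le (x := y) hyS
    rw [sub_self, Fin.val_zero] at this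
    omega
  · have hk := Nat.div_add_mod (e - 1) n
    have hmod : (backDist S y - 1) % n = i := by
      rw [hdist, show e - r + i - 1 = n * ((e - 1) / n) + i by omega, Nat.mul_add_mod,
        Nat.mod_eq_of_lt hin]
    rw [blockStart, hmod, hi, Fin.ofNat_val_eq_self, sub_sub_cancel]

end Portrait

theorem isPortrait_insert_image_arcBlock {d n : ℕ} [NeZero (d * n)] (hn : 2 ≤ n)
    {P : Finset (Fin (d * n))} (hP : IsPosPolygon n P) {A : Finset (Fin (d * n))}
    (hPA : ∀ a ∈ A, Disjoint P (arcBlock n a))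
    (hAA : ∀ a ∈ A, ∀ b ∈ A, arcBlock n a ≠ arcBlock n b →
      Disjoint (arcBlock n a) (arcBlock n b))
    (hcover : ∀ x ∉ P, ∃ a ∈ A, x ∈ arcBlock n a) :
    IsPortrait d n (insert P (A.image (arcBlock n))) := by
  refine ⟨?_, ?_, ?_⟩
  · simp only [Finset.forall_mem_insert, Finset.forall_mem_image]
    exact ⟨hP, fun a _ => isPosPolygon_arcBlock hn (dvd_mul_left n d) a⟩
  · simp only [Finset.forall_mem_insert, Finset.forall_mem_image]
    refine ⟨⟨fun h => absurd rfl h, fun a ha _ => ⟨hPA a ha, not_crosses_arcBlock (hPA a ha)⟩⟩,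
      fun a ha => ⟨fun _ => ⟨(hPA a ha).symm, fun hc => not_crosses_arcBlock (hPA a ha)
        hc.symm⟩, fun b hb hab => ⟨hAA a ha b hb hab, not_crosses_arcBlock
        (hAA a ha b hb hab)⟩⟩⟩
  · intro x
    by_cases hx : x ∈ P
    · exact ⟨P, Finset.mem_insert_self _ _, hx⟩
    · obtain ⟨a, ha, hxa⟩ := hcover x hx
      exact ⟨_, Finset.mem_insert_of_mem (Finset.mem_image_of_mem _ ha), hxa⟩

theorem exists_isPortrait_of_isPosPolygon {d n : ℕ} [NeZero (d * n)] (hn : 2 ≤ n)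
    {P : Finset (Fin (d * n))} (hP : IsPosPolygon n P) :
    ∃ PP : Finset (Finset (Fin (d * n))), IsPortrait d n PP ∧ P ∈ PP := by
  classical
  have hnm : n ∣ d * n := dvd_mul_left n d
  have key {x y} (hx : x ∉ P) (hy : y ∈ arcBlock n (blockStart P n x)) :=
    blockStart_eq_of_mem_arcBlock hP.1 hnm hP.2.2 hx hy
  refine ⟨_, isPortrait_insert_image_arcBlock hn hP
    (A := (Finset.univ.filter (· ∉ P)).image (blockStart P n)) ?_ ?_ ?_,
    Finset.mem_insert_self _ _⟩
  · simp only [Finset.forall_mem_image, Finset.mem_filter, Finset.mem_univ, true_and]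
    exact fun x hx => Finset.disjoint_right.2 fun y hy => (key hx hy).1
  · simp only [Finset.forall_mem_image, Finset.mem_filter, Finset.mem_univ, true_and]
    intro x hx y hy hxy
    refine Finset.disjoint_left.2 fun z hzx hzy => hxy ?_
    rw [← (key hx hzx).2, (key hy hzy).2]
  · intro x hx
    exact ⟨blockStart P n x, Finset.mem_image_of_mem _ (by simpa using hx),
      mem_arcBlock_blockStart (by omega) P x⟩

theorem extendable_iff_positively_oriented_general (d n : ℕ) (hn : 2 ≤ n)
    (P : Finset (Fin (d * n))) (hP : IsCoveringPolygon n P) :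
    (∃ PP : Finset (Finset (Fin (d * n))), IsPortrait d n PP ∧ P ∈ PP) ↔
      ∀ p q, IsNext P p q → label n q = label n p + 1 := by
  refine ⟨fun ⟨PP, hPP, hmem⟩ => (hPP.1 P hmem).2.2, fun hpos => ?_⟩
  obtain ⟨p, -⟩ := Finset.card_pos.1 (by have := hP.1; omega : 0 < P.card)
  have : NeZero (d * n) := ⟨p.pos.ne'⟩
  exact exists_isPortrait_of_isPosPolygon hn ⟨hP.1, hP.2.1, hpos⟩

/-- A polygon `P` whose boundary maps under `σ_d` as a covering map
onto an `n`-gon can be extended to a sibling portrait in the disk if and only if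
the covering is positively oriented. -/
theorem extendable_iff_positively_oriented (d n : ℕ) (hd : 1 ≤ d) (hn : 2 ≤ n)
    (P : Finset (Fin (d * n))) (hP : IsCoveringPolygon n P) :
    (∃ PP : Finset (Finset (Fin (d * n))), IsPortrait d n PP ∧ P ∈ PP) ↔
      ∀ p q, IsNext P p q → label n q = label n p + 1 :=
  extendable_iff_positively_oriented_general d n hn P hP
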